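/- Let ω, ω̂, u ∈ ℝ, M, M̂ > 0, η, η̂ ∈ (0,1]. Consider on ℝ⁶ with coordinates q = (x,y,z,x̂,ŷ,ẑ) the drift vector field b = (−ωy − (M/2)x + uz, ωx − (M/2)y, −ux, −ω̂ŷ − (M̂/2)x̂ + uẑ + x̂ẑE(z,ẑ), ω̂x̂ − (M̂/2)ŷ + ŷẑE(z,ẑ), −ux̂ − (1−ẑ²)E(z,ẑ)) and the diffusion vector field g = (−√(ηM)xz, −√(ηM)yz, √(ηM)(1−z²), −√(η̂M̂)x̂ẑ, −√(η̂M̂)ŷẑ, √(η̂M̂)(1−ẑ²)). Then for V(q) = √(1−z) + √(1−ẑ) and every q with z ∈ (−1,1) and ẑ ∈ (−1,1), the infinitesimal generator satisfies ℒV(q) = u·U₁(q) + U₂(q), where U₁(q) := (1/2)(x(1−z)^{−1/2} + x̂(1−ẑ)^{−1/2}) and U₂(q) := −(1/8)[ηM(1+z)²√(1−z) + η̂M̂(1+ẑ)²√(1−ẑ)] + (1/2)(1+ẑ)E(z,ẑ)√(1−ẑ). -/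

import Mathlib

/-!
Both summands of V = √(1 - z) + √(1 - ẑ) depend on a single coordinate, and the generator is
additive on C² functions, so ℒV only sees the z- and ẑ-components of b and g:
ℒ(φ ∘ z) = b_z φ'(z) + ½ g_z² φ''(z) with φ' = -1/(2√(1-z)) and φ'' = -1/(4√(1-z)³).
Writing z = 1 - s² and ẑ = 1 - t², the claimed identity becomes a rational identity in s, t and
the square roots √(ηM), √(η̂M̂), which clears to a polynomial one.
-/

/-- E(z,ẑ) := √(η̂M̂)(√(η̂M̂)·ẑ − √(ηM)·z). -/
noncomputable def Efun (η η' M M' z z' : ℝ) : ℝ :=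
  Real.sqrt (η' * M') * (Real.sqrt (η' * M') * z' - Real.sqrt (η * M) * z)

/-- Bloch-coordinate drift vector field of the coupled stochastic master equations,
with coordinates q = (x, y, z, x̂, ŷ, ẑ). -/
noncomputable def bdrift (ω ω' u M M' η η' : ℝ) (q : Fin 6 → ℝ) : Fin 6 → ℝ :=
  ![-ω * q 1 - M / 2 * q 0 + u * q 2,
    ω * q 0 - M / 2 * q 1,
    -u * q 0,
    -ω' * q 4 - M' / 2 * q 3 + u * q 5 + q 3 * q 5 * Efun η η' M M' (q 2) (q 5),
    ω' * q 3 - M' / 2 * q 4 + q 4 * q 5 * Efun η η' M M' (q 2) (q 5),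
    -u * q 3 - (1 - (q 5) ^ 2) * Efun η η' M M' (q 2) (q 5)]

/-- Bloch-coordinate diffusion vector field of the coupled stochastic master equations. -/
noncomputable def gdiff (M M' η η' : ℝ) (q : Fin 6 → ℝ) : Fin 6 → ℝ :=
  ![-Real.sqrt (η * M) * q 0 * q 2,
    -Real.sqrt (η * M) * q 1 * q 2,
    Real.sqrt (η * M) * (1 - (q 2) ^ 2),
    -Real.sqrt (η' * M') * q 3 * q 5,
    -Real.sqrt (η' * M') * q 4 * q 5,
    Real.sqrt (η' * M') * (1 - (q 5) ^ 2)]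

/-- The infinitesimal generator ℒf(q) = Σᵢ bᵢ(q)∂f/∂qᵢ + (1/2)Σᵢⱼ gᵢ(q)gⱼ(q)∂²f/∂qᵢ∂qⱼ
of a diffusion with drift `b` and a single diffusion vector field `g`. -/
noncomputable def generator (b g : (Fin 6 → ℝ) → Fin 6 → ℝ)
    (f : (Fin 6 → ℝ) → ℝ) (q : Fin 6 → ℝ) : ℝ :=
  (∑ i, b q i * fderiv ℝ f q (Pi.single i 1)) +
    (1/2) * ∑ i, ∑ j, g q i * g q j *
      fderiv ℝ (fun p => fderiv ℝ f p (Pi.single i 1)) q (Pi.single j 1)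

/-- U₁(q) := (1/2)(x(1−z)^{−1/2} + x̂(1−ẑ)^{−1/2}). -/
noncomputable def U1 (q : Fin 6 → ℝ) : ℝ :=
  (1/2) * (q 0 * (1 - q 2) ^ (-(1/2) : ℝ) + q 3 * (1 - q 5) ^ (-(1/2) : ℝ))

/-- U₂(q) := −(1/8)[ηM(1+z)²√(1−z) + η̂M̂(1+ẑ)²√(1−ẑ)] + (1/2)(1+ẑ)E(z,ẑ)√(1−ẑ). -/
noncomputable def U2 (η η' M M' : ℝ) (q : Fin 6 → ℝ) : ℝ :=
  -(1/8) * (η * M * (1 + q 2) ^ 2 * Real.sqrt (1 - q 2)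
      + η' * M' * (1 + q 5) ^ 2 * Real.sqrt (1 - q 5))
    + (1/2) * (1 + q 5) * Efun η η' M M' (q 2) (q 5) * Real.sqrt (1 - q 5)

open Filter Topology

theorem fderiv_comp_apply_apply {ι : Type*} [Fintype ι] {h : ℝ → ℝ} {p : ι → ℝ} (k : ι)
    (hh : DifferentiableAt ℝ h (p k)) (v : ι → ℝ) :
    fderiv ℝ (fun p => h (p k)) p v = deriv h (p k) * v k := by
  have hd : HasFDerivAt (fun p : ι → ℝ => h (p k))
      (deriv h (p k) • ContinuousLinearMap.proj k) p :=
    hh.hasDerivAt.comp_hasFDerivAt p (ContinuousLinearMap.proj k : (ι → ℝ) →L[ℝ] ℝ).hasFDerivAt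
  rw [hd.fderiv]
  simp

theorem ContDiffAt.differentiableAt_fderiv_apply {𝕜 E F : Type*} [NontriviallyNormedField 𝕜]
    [NormedAddCommGroup E] [NormedSpace 𝕜 E] [NormedAddCommGroup F] [NormedSpace 𝕜 F]
    {f : E → F} {q : E} (hf : ContDiffAt 𝕜 2 f q) (v : E) :
    DifferentiableAt 𝕜 (fun p => fderiv 𝕜 f p v) q :=
  ((hf.fderiv_right (m := 1) (by norm_num)).differentiableAt (by norm_num)).clm_apply
    (differentiableAt_const v)

theorem contDiffAt_sqrt_one_sub {z : ℝ} (hz : z < 1) :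
    ContDiffAt ℝ 2 (fun x => √(1 - x)) z :=
  (contDiffAt_const.sub contDiffAt_id).sqrt (by simp; linarith)

theorem hasDerivAt_sqrt_one_sub {z : ℝ} (hz : z < 1) :
    HasDerivAt (fun x => √(1 - x)) (-1 / (2 * √(1 - z))) z := by
  simpa using ((hasDerivAt_id' z).const_sub 1).sqrt (by linarith)

theorem deriv_sqrt_one_sub {z : ℝ} (hz : z < 1) :
    deriv (fun x => √(1 - x)) z = -1 / (2 * √(1 - z)) :=
  (hasDerivAt_sqrt_one_sub hz).deriv

theorem deriv_deriv_sqrt_one_sub {z : ℝ} (hz : z < 1) :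
    deriv (deriv fun x => √(1 - x)) z = -1 / (4 * √(1 - z) ^ 3) := by
  have hev : deriv (fun x => √(1 - x)) =ᶠ[𝓝 z] fun x => -1 / (2 * √(1 - x)) :=
    (eventually_lt_nhds hz).mono fun x hx => deriv_sqrt_one_sub hx
  have hs : √(1 - z) ≠ 0 := (Real.sqrt_pos.mpr (by linarith)).ne'
  rw [hev.deriv_eq, ((hasDerivAt_const z (-1 : ℝ)).fun_div
    ((hasDerivAt_sqrt_one_sub hz).const_mul 2) (by positivity)).deriv]
  field_simp
  ring

section Generator

variable (b g : (Fin 6 → ℝ) → Fin 6 → ℝ)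

theorem generator_add {f₁ f₂ : (Fin 6 → ℝ) → ℝ} {q : Fin 6 → ℝ}
    (h₁ : ContDiffAt ℝ 2 f₁ q) (h₂ : ContDiffAt ℝ 2 f₂ q) :
    generator b g (f₁ + f₂) q = generator b g f₁ q + generator b g f₂ q := by
  have hd₁ : ∀ᶠ p in 𝓝 q, DifferentiableAt ℝ f₁ p :=
    (h₁.eventually (by simp)).mono fun p hp => hp.differentiableAt (by norm_num)
  have hd₂ : ∀ᶠ p in 𝓝 q, DifferentiableAt ℝ f₂ p :=
    (h₂.eventually (by simp)).mono fun p hp => hp.differentiableAt (by norm_num)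
  have hpartial (v : Fin 6 → ℝ) :
      fderiv ℝ (fun p => fderiv ℝ (f₁ + f₂) p v) q =
        fderiv ℝ (fun p => fderiv ℝ f₁ p v) q + fderiv ℝ (fun p => fderiv ℝ f₂ p v) q := by
    have hev : (fun p => fderiv ℝ (f₁ + f₂) p v) =ᶠ[𝓝 q]
        fun p => fderiv ℝ f₁ p v + fderiv ℝ f₂ p v := by
      filter_upwards [hd₁, hd₂] with p hp₁ hp₂
      rw [fderiv_add hp₁ hp₂, add_apply]
    rw [hev.fderiv_eq, fderiv_fun_add (h₁.differentiableAt_fderiv_apply v)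
      (h₂.differentiableAt_fderiv_apply v)]
  simp only [generator, hpartial, fderiv_add hd₁.self_of_nhds hd₂.self_of_nhds,
    add_apply, mul_add, Finset.sum_add_distrib]
  ring

theorem generator_comp_apply {h : ℝ → ℝ} {q : Fin 6 → ℝ} (k : Fin 6)
    (hh : ContDiffAt ℝ 2 h (q k)) :
    generator b g (fun p => h (p k)) q =
      b q k * deriv h (q k) + 1 / 2 * g q k ^ 2 * deriv (deriv h) (q k) := by
  have hd : ∀ᶠ p in 𝓝 q, DifferentiableAt ℝ h (p k) :=
    (continuous_apply k).continuousAt.eventually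
      ((hh.eventually (by simp)).mono fun x hx => hx.differentiableAt (by norm_num))
  have hd' : DifferentiableAt ℝ (deriv h) (q k) :=
    (hh.derivWithin (m := 1) (by norm_num)).differentiableAt (by norm_num)
  have hpartial (i j : Fin 6) :
      fderiv ℝ (fun p => fderiv ℝ (fun p => h (p k)) p (Pi.single i 1)) q (Pi.single j 1) =
        deriv (deriv h) (q k) * Pi.single (M := fun _ => ℝ) i 1 k *
          Pi.single (M := fun _ => ℝ) j 1 k := by
    have hev : (fun p => fderiv ℝ (fun p => h (p k)) p (Pi.single i 1)) =ᶠ[𝓝 q]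
        fun p => deriv h (p k) * Pi.single (M := fun _ => ℝ) i 1 k := by
      filter_upwards [hd] with p hp using fderiv_comp_apply_apply k hp _
    rw [hev.fderiv_eq, fderiv_comp_apply_apply k (hd'.mul_const _), deriv_mul_const hd']
  simp only [generator, hpartial, fderiv_comp_apply_apply k hd.self_of_nhds,
    Pi.single_apply, mul_ite, mul_one, mul_zero, Finset.sum_ite_eq, Finset.mem_univ, if_true]
  ring

theorem generator_sqrt_one_sub_add_sqrt_one_sub {q : Fin 6 → ℝ} {i j : Fin 6}
    (hi : q i < 1) (hj : q j < 1) :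
    generator b g (fun p => √(1 - p i) + √(1 - p j)) q =
      b q i * (-1 / (2 * √(1 - q i))) + 1 / 2 * g q i ^ 2 * (-1 / (4 * √(1 - q i) ^ 3)) +
        (b q j * (-1 / (2 * √(1 - q j))) + 1 / 2 * g q j ^ 2 * (-1 / (4 * √(1 - q j) ^ 3))) := by
  have hcomp {k : Fin 6} (hk : q k < 1) : ContDiffAt ℝ 2 (fun p : Fin 6 → ℝ => √(1 - p k)) q :=
    (contDiffAt_sqrt_one_sub hk).comp (f := fun p : Fin 6 → ℝ => p k) q
      (contDiff_apply ℝ ℝ k).contDiffAt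
  rw [show (fun p : Fin 6 → ℝ => √(1 - p i) + √(1 - p j)) =
      (fun p => √(1 - p i)) + fun p => √(1 - p j) from rfl,
    generator_add _ _ (hcomp hi) (hcomp hj),
    generator_comp_apply _ _ i (contDiffAt_sqrt_one_sub hi),
    generator_comp_apply _ _ j (contDiffAt_sqrt_one_sub hj),
    deriv_sqrt_one_sub hi, deriv_sqrt_one_sub hj,
    deriv_deriv_sqrt_one_sub hi, deriv_deriv_sqrt_one_sub hj]

end Generator

theorem generator_of_lyapunov_function (ω ω' u M M' η η' : ℝ)
    (hM : 0 < M) (hM' : 0 < M')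
    (hη : η ∈ Set.Ioc (0 : ℝ) 1) (hη' : η' ∈ Set.Ioc (0 : ℝ) 1)
    (q : Fin 6 → ℝ) (hz : q 2 ∈ Set.Ioo (-1 : ℝ) 1) (hz' : q 5 ∈ Set.Ioo (-1 : ℝ) 1) :
    generator (bdrift ω ω' u M M' η η') (gdiff M M' η η')
        (fun p => Real.sqrt (1 - p 2) + Real.sqrt (1 - p 5)) q
      = u * U1 q + U2 η η' M M' q := by
  have hz₁ : 0 < 1 - q 2 := sub_pos.mpr hz.2
  have hz₁' : 0 < 1 - q 5 := sub_pos.mpr hz'.2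
  rw [generator_sqrt_one_sub_add_sqrt_one_sub _ _ hz.2 hz'.2]
  simp only [bdrift, gdiff, U1, U2, Efun, Real.rpow_neg hz₁.le, Real.rpow_neg hz₁'.le,
    ← Real.sqrt_eq_rpow, Matrix.cons_val]
  have hq : q 2 = 1 - √(1 - q 2) ^ 2 := by rw [Real.sq_sqrt hz₁.le]; ring
  have hq' : q 5 = 1 - √(1 - q 5) ^ 2 := by rw [Real.sq_sqrt hz₁'.le]; ring
  have ha : η * M = √(η * M) ^ 2 := (Real.sq_sqrt (mul_nonneg hη.1.le hM.le)).symm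
  have ha' : η' * M' = √(η' * M') ^ 2 := (Real.sq_sqrt (mul_nonneg hη'.1.le hM'.le)).symm
  have hs : √(1 - q 2) ≠ 0 := (Real.sqrt_pos.mpr hz₁).ne'
  have hs' : √(1 - q 5) ≠ 0 := (Real.sqrt_pos.mpr hz₁').ne'
  generalize √(1 - q 2) = s at *
  generalize √(1 - q 5) = t at *
  generalize √(η * M) = a at *
  generalize √(η' * M') = a' at *
  rw [hq, hq', ha, ha']
  field_simp
  ring
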